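/- Let f : ℝ → ℝ₊ be a log-concave integrable function with barycenter μ and a mode x_max ≥ μ. Then ∫_ℝ f ≥ f(μ)(x_max − μ); consequently, if x₀ ≥ 3(∫ f)/f(μ) + μ₊ then f(x₀) ≤ f(μ)/2. -/

import Mathlib

open MeasureTheory ProbabilityTheory Real
open scoped ENNReal NNReal Classical

/-- Differential entropy of a density `f`: `-∫ f log f`, as an extended real.
If neither part is finite, the convention `⊤ - ⊤ = ⊥` applies, matching the
convention that the entropy is `-∞` when the integral does not exist. -/
noncomputable def dEntFun (f : ℝ → ℝ) : EReal :=
  ((∫⁻ x, ENNReal.ofReal (-(f x * Real.log (f x)))) : ℝ≥0∞)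
    - ((∫⁻ x, ENNReal.ofReal (f x * Real.log (f x))) : ℝ≥0∞)

/-- `f` is a density of the real random variable `X` under `P`. -/
def IsDensityOf {Ω : Type*} [MeasurableSpace Ω] (P : Measure Ω) (X : Ω → ℝ) (f : ℝ → ℝ) :
    Prop :=
  Measurable f ∧ (∀ x, 0 ≤ f x) ∧
    Measure.map X P = volume.withDensity fun x => ENNReal.ofReal (f x)

/-- Differential entropy of `X` under `P`; `⊥` if `X` has no density. -/
noncomputable def dEnt {Ω : Type*} [MeasurableSpace Ω] (P : Measure Ω) (X : Ω → ℝ) : EReal :=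
  if h : ∃ f, IsDensityOf P X f then dEntFun h.choose else ⊥

/-- The differential entropy exists and is finite. -/
def FinEnt {Ω : Type*} [MeasurableSpace Ω] (P : Measure Ω) (X : Ω → ℝ) : Prop :=
  dEnt P X ≠ ⊤ ∧ dEnt P X ≠ ⊥

/-- A nonnegative function is log-concave if `f(ax+by) ≥ f(x)^a f(y)^b` whenever
`a, b ≥ 0` and `a + b = 1`. -/
def LogConcave (f : ℝ → ℝ) : Prop :=
  ∀ x y a b : ℝ, 0 ≤ a → 0 ≤ b → a + b = 1 → f x ^ a * f y ^ b ≤ f (a * x + b * y)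

/-! Log-concave functions are quasi-concave, so on `[a, b]` such an `f` stays above
`min (f a) (f b)` and `∫ f ≥ min (f a) (f b) * (b - a)`. On `[μ, x_max]` this is the first claim.
If `f x₀ > f μ / 2` for some `x₀ ≥ μ + 3 ∫ f / f μ`, the same bound on `[μ, x₀]` would give
`∫ f ≥ (3/2) ∫ f`. -/

theorem LogConcave.quasiconcaveOn {f : ℝ → ℝ} (hf0 : ∀ x, 0 ≤ f x) (hlc : LogConcave f) :
    QuasiconcaveOn ℝ Set.univ f := by
  refine quasiconcaveOn_iff_min_le.2 ⟨convex_univ, fun x _ y _ a b ha hb hab => ?_⟩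
  set m := min (f x) (f y)
  have hm : 0 ≤ m := le_min (hf0 x) (hf0 y)
  calc m = m ^ a * m ^ b := by rw [← Real.rpow_add' hm (by rw [hab]; norm_num), hab, Real.rpow_one]
    _ ≤ f x ^ a * f y ^ b :=
        mul_le_mul (Real.rpow_le_rpow hm (min_le_left _ _) ha)
          (Real.rpow_le_rpow hm (min_le_right _ _) hb) (Real.rpow_nonneg hm b)
          (Real.rpow_nonneg (hf0 x) a)
    _ ≤ f (a • x + b • y) := hlc x y a b ha hb hab

theorem QuasiconcaveOn.le_of_mem_Icc {β : Type*} [LinearOrder β] {f : ℝ → β}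
    (hf : QuasiconcaveOn ℝ Set.univ f) {a b t : ℝ} {c : β} (ha : c ≤ f a) (hb : c ≤ f b)
    (ht : t ∈ Set.Icc a b) : c ≤ f t :=
  ((hf c).ordConnected.out ⟨Set.mem_univ a, ha⟩ ⟨Set.mem_univ b, hb⟩ ht).2

theorem mul_sub_le_integral_of_le_on_Icc {f : ℝ → ℝ} (hf0 : ∀ x, 0 ≤ f x) (hfi : Integrable f)
    {a b c : ℝ} (hab : a ≤ b) (hc : ∀ t ∈ Set.Icc a b, c ≤ f t) :
    c * (b - a) ≤ ∫ x, f x := by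
  have hIcc : c * (b - a) ≤ ∫ x in Set.Icc a b, f x := by
    simpa [Real.volume_real_Icc_of_le hab] using
      setIntegral_ge_of_const_le_real measurableSet_Icc measure_Icc_lt_top.ne hc hfi.integrableOn
  exact hIcc.trans (setIntegral_le_integral hfi (Filter.Eventually.of_forall hf0))

theorem LogConcave.mul_sub_le_integral {f : ℝ → ℝ} (hf0 : ∀ x, 0 ≤ f x) (hfi : Integrable f)
    (hlc : LogConcave f) {a b c : ℝ} (hab : a ≤ b) (ha : c ≤ f a) (hb : c ≤ f b) :
    c * (b - a) ≤ ∫ x, f x :=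
  mul_sub_le_integral_of_le_on_Icc hf0 hfi hab fun _ ht =>
    (hlc.quasiconcaveOn hf0).le_of_mem_Icc ha hb ht

theorem logConcave_mode_bound_general (f : ℝ → ℝ) (hf0 : ∀ x, 0 ≤ f x)
    (hfi : Integrable f) (hpos : 0 < ∫ x, f x)
    (hlc : LogConcave f)
    (μ : ℝ) (hfμ : 0 < f μ)
    (xmax : ℝ) (hmode : ∀ x, f x ≤ f xmax) (hxmaxμ : μ ≤ xmax) :
    f μ * (xmax - μ) ≤ ∫ x, f x ∧
    ∀ x₀ : ℝ, 3 * (∫ x, f x) / f μ + max μ 0 ≤ x₀ → f x₀ ≤ f μ / 2 := by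
  refine ⟨hlc.mul_sub_le_integral hf0 hfi hxmaxμ le_rfl (hmode μ), fun x₀ hx₀ => ?_⟩
  by_contra! hx₀_large
  have hgap : 3 * (∫ x, f x) / f μ ≤ x₀ - μ := by linarith [le_max_left μ 0]
  have hμx₀ : μ ≤ x₀ := by linarith [show 0 ≤ 3 * (∫ x, f x) / f μ by positivity]
  have hint := hlc.mul_sub_le_integral hf0 hfi hμx₀ (half_le_self hfμ.le) hx₀_large.le
  have : f μ / 2 * (3 * (∫ x, f x) / f μ) = 3 / 2 * ∫ x, f x := by field_simp
  linarith [mul_le_mul_of_nonneg_left hgap (by positivity : 0 ≤ f μ / 2)]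

/-- For log-concave integrable `f` with mode `x_max ≥ μ`:
`∫ f ≥ f(μ)(x_max - μ)`, and `f(x₀) ≤ f(μ)/2` whenever `x₀ ≥ 3∫f/f(μ) + μ₊`. -/
theorem logConcave_mode_bound (f : ℝ → ℝ) (hf0 : ∀ x, 0 ≤ f x)
    (hfi : Integrable f) (hpos : 0 < ∫ x, f x)
    (hxf : Integrable (fun x => x * f x)) (hlc : LogConcave f)
    (μ : ℝ) (hμ : μ = (∫ x, x * f x) / ∫ x, f x) (hfμ : 0 < f μ)
    (xmax : ℝ) (hmode : ∀ x, f x ≤ f xmax) (hxmaxμ : μ ≤ xmax) :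
    f μ * (xmax - μ) ≤ ∫ x, f x ∧
    ∀ x₀ : ℝ, 3 * (∫ x, f x) / f μ + max μ 0 ≤ x₀ → f x₀ ≤ f μ / 2 :=
  logConcave_mode_bound_general f hf0 hfi hpos hlc μ hfμ xmax hmode hxmaxμ
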